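/- arXiv:hep-th/9604080 — 13 statements merged into one kernel-verified Lean document; each statement's English description precedes it below -/
import Mathlib

section
/- Let n, r be natural numbers with r ≤ n and let x be a complex (n+1)×(r+1) matrix, with rows indexed by {0,…,n} and columns by {0,…,r}. For row indices i₀,…,i_r ∈ {0,…,n} let ⟨i₀,…,i_r⟩ denote the determinant of the (r+1)×(r+1) matrix whose p-th row (p = 0,…,r) is the i_p-th row of x. Then for all choices of row indices i₀,…,i_r, j₀,…,j_r ∈ {0,…,n} the Plücker relation holds: ⟨i₀,i₁,…,i_r⟩·⟨j₀,j₁,…,j_r⟩ = Σ_{p=0}^{r} ⟨j_p,i₁,…,i_r⟩·⟨j₀,…,j_{p−1},i₀,j_{p+1},…,j_r⟩, where in the second factor of the p-th summand the entry j_p has been replaced by i₀. -/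
/-- **Plücker relation for maximal minors.**
Let `x` be a complex `(n+1) × (r+1)` matrix (`r ≤ n`).  For a choice of row indices
`i : Fin (r+1) → Fin (n+1)`, `minor i` is the determinant of the `(r+1) × (r+1)` matrix whose
`p`-th row is the `i p`-th row of `x`.  Then for all choices of row indices `i, j`:
`⟨i₀,…,i_r⟩·⟨j₀,…,j_r⟩ = Σ_p ⟨j_p,i₁,…,i_r⟩·⟨j₀,…,j_{p−1},i₀,j_{p+1},…,j_r⟩`. -/
theorem plucker_relation (n r : ℕ) (hrn : r ≤ n)
    (x : Matrix (Fin (n+1)) (Fin (r+1)) ℂ)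
    (minor : (Fin (r+1) → Fin (n+1)) → ℂ)
    (hminor : ∀ i, minor i = Matrix.det (Matrix.of fun p q => x (i p) q))
    (i j : Fin (r+1) → Fin (n+1)) :
    minor i * minor j =
      ∑ p : Fin (r+1),
        minor (Function.update i 0 (j p)) * minor (Function.update j p (i 0)) := by
  classical
  simp only [hminor]
  set M : Matrix (Fin (r+1)) (Fin (r+1)) ℂ := Matrix.of fun p q => x (i p) q with hM
  set N : Matrix (Fin (r+1)) (Fin (r+1)) ℂ := Matrix.of fun p q => x (j p) q with hN
  set v : Fin (r+1) → ℂ := fun q => x (i 0) q with hv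
  -- the linear functional u ↦ det (M with row 0 replaced by u)
  let L : (Fin (r+1) → ℂ) →ₗ[ℂ] ℂ :=
    { toFun := fun u => (M.updateRow 0 u).det
      map_add' := fun u w => by
        simpa using Matrix.det_updateRow_add M 0 u w
      map_smul' := fun c u => by
        simpa using Matrix.det_updateRow_smul M 0 c u }
  -- Cramer's rule: det N • v = ∑ p, det (N.updateRow p v) • (p-th row of N)
  have cram : (N.det • v) = ∑ p : Fin (r+1), (N.updateRow p v).det • (N p) := by
    have h := Matrix.mulVec_cramer N.transpose v
    rw [Matrix.det_transpose] at h
    funext q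
    have hq := congrFun h q
    simp only [Matrix.mulVec, dotProduct, Matrix.transpose_apply] at hq
    rw [Finset.sum_apply]
    rw [← hq]
    apply Finset.sum_congr rfl
    intro p _
    rw [Matrix.cramer_transpose_apply]
    simp [mul_comm]
  -- rewrite each matrix in the statement
  have hMi : M.updateRow 0 v = M := by
    have : v = M 0 := by funext q; rfl
    rw [this, Matrix.updateRow_eq_self]
  have hMs : ∀ p : Fin (r+1),
      (Matrix.of fun p' q => x (Function.update i 0 (j p) p') q) = M.updateRow 0 (N p) := by
    intro p
    funext p' q
    by_cases h : p' = 0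
    · subst h; simp [Matrix.updateRow_self]; rfl
    · simp [Function.update_of_ne h, Matrix.updateRow_ne h, hM]
  have hNs : ∀ p : Fin (r+1),
      (Matrix.of fun p' q => x (Function.update j p (i 0) p') q) = N.updateRow p v := by
    intro p
    funext p' q
    by_cases h : p' = p
    · subst h; simp [Matrix.updateRow_self, hv]
    · simp [Function.update_of_ne h, Matrix.updateRow_ne h, hN]
  have hL := congrArg L cram
  simp only [map_smul, map_sum, smul_eq_mul] at hL
  have hLv : L v = M.det := by
    show (M.updateRow 0 v).det = M.det
    rw [hMi]
  rw [hLv] at hL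
  calc M.det * N.det = N.det * M.det := mul_comm _ _
    _ = ∑ p : Fin (r+1), (N.updateRow p v).det * L (N p) := hL
    _ = _ := by
        apply Finset.sum_congr rfl
        intro p _
        rw [hMs p, hNs p]
        show (N.updateRow p v).det * (M.updateRow 0 (N p)).det = _
        ring
end

section
/- Let n, r be natural numbers with r ≤ n and let x be a complex (n+1)×(r+1) matrix, with rows indexed by {0,…,n}. For row indices i₀,…,i_r let ⟨i₀,…,i_r⟩ denote the determinant of the (r+1)×(r+1) matrix whose p-th row is the i_p-th row of x. Then for all row indices i₀,i₁,…,i_r and j₀,j₁ in {0,…,n} the three-term Plücker relation holds: ⟨i₀,i₁,i₂,…,i_r⟩·⟨j₀,j₁,i₂,…,i_r⟩ = ⟨j₀,i₁,i₂,…,i_r⟩·⟨i₀,j₁,i₂,…,i_r⟩ + ⟨j₁,i₁,i₂,…,i_r⟩·⟨j₀,i₀,i₂,…,i_r⟩. -/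
/-!
Any `m + 2` vectors `v₀, …, v_{m+1}` in `R^{m+1}` satisfy the Cramer relation
`∑ₖ (-1)^k det(v without vₖ) • vₖ = 0`: its `j`-th coordinate is the column-zero expansion of
a determinant whose first column repeats column `j + 1`. Fix the rows `u = (x_{i₂}, …, x_{i_r})`
and `b = x_{i₁}`, and apply the linear form `y ↦ det(y, b, u)` to the Cramer relation for
`(c, a, d, u)`. The form vanishes on every row of `u`, so only three terms survive, and
these are the three-term Plücker relation.
-/

open Matrix

theorem Fin.removeNth_succ_cons {α : Type*} {n : ℕ} (i : Fin (n + 1)) (x : α)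
    (p : Fin (n + 1) → α) :
    i.succ.removeNth (Fin.cons x p : Fin (n + 2) → α) = Fin.cons x (i.removeNth p) :=
  Fin.cons_comp_succ_succAbove x p i

namespace Matrix

variable {R : Type*} [CommRing R]

theorem sum_neg_one_pow_mul_det_removeNth_smul_eq_zero {m : ℕ}
    (v : Fin (m + 2) → Fin (m + 1) → R) :
    ∑ k : Fin (m + 2), ((-1) ^ (k : ℕ) * det (of (k.removeNth v))) • v k = 0 := by
  funext j
  have hdup : det (of fun a => Fin.cons (v a j) (v a) : Matrix _ (Fin (m + 2)) R) = 0 :=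
    det_zero_of_column_eq (Fin.succ_ne_zero j).symm fun a => by simp
  rw [det_succ_column_zero] at hdup
  simp only [Finset.sum_apply, Pi.smul_apply, smul_eq_mul, Pi.zero_apply]
  rw [← hdup]
  refine Finset.sum_congr rfl fun k _ => ?_
  have hminor : (of fun a => Fin.cons (v a j) (v a)).submatrix k.succAbove Fin.succ =
      of (k.removeNth v) := rfl
  rw [hminor, of_apply, Fin.cons_zero]
  ring

theorem det_cons_cons_mul_det_cons_cons {s : ℕ} (a b c d : Fin (s + 2) → R)
    (u : Fin s → Fin (s + 2) → R) :
    det (of (Fin.cons a (Fin.cons b u))) * det (of (Fin.cons c (Fin.cons d u))) =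
      det (of (Fin.cons c (Fin.cons b u))) * det (of (Fin.cons a (Fin.cons d u))) +
        det (of (Fin.cons d (Fin.cons b u))) * det (of (Fin.cons c (Fin.cons a u))) := by
  let ℓ : (Fin (s + 2) → R) →ₗ[R] R :=
    detRowAlternating.toMultilinearMap.toLinearMap (Fin.cons 0 (Fin.cons b u)) 0
  have hℓ (y : Fin (s + 2) → R) : ℓ y = det (of (Fin.cons y (Fin.cons b u))) := by
    simp only [ℓ, MultilinearMap.toLinearMap_apply, Fin.update_cons_zero]
    rfl
  have hℓu (p : Fin s) : ℓ (u p) = 0 := by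
    rw [hℓ]
    exact det_zero_of_row_eq (i := 0) (j := p.succ.succ) (Fin.succ_ne_zero _).symm
      (funext fun q => by simp)
  have key := congrArg ℓ
    (sum_neg_one_pow_mul_det_removeNth_smul_eq_zero (Fin.cons c (Fin.cons a (Fin.cons d u))))
  rw [map_sum, map_zero, Fin.sum_univ_succ, Fin.sum_univ_succ, Fin.sum_univ_succ] at key
  simp only [map_smul, smul_eq_mul, Fin.cons_succ, Fin.cons_zero, hℓu, mul_zero,
    Finset.sum_const_zero, add_zero, Fin.removeNth_zero, Fin.tail_cons, Fin.removeNth_succ_cons,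
    Fin.val_zero, Fin.val_succ] at key
  simp only [hℓ] at key
  linear_combination -key

end Matrix

/-- **Three-term Plücker relation.**
Let `x` be a complex `(n+1) × (r+1)` matrix (`1 ≤ r ≤ n`).  For row indices
`i : Fin (r+1) → Fin (n+1)`, `minor i` is the determinant of the `(r+1) × (r+1)` matrix whose
`p`-th row is the `i p`-th row of `x`.  Then
`⟨i₀,i₁,i₂,…⟩·⟨j₀,j₁,i₂,…⟩ = ⟨j₀,i₁,i₂,…⟩·⟨i₀,j₁,i₂,…⟩ + ⟨j₁,i₁,i₂,…⟩·⟨j₀,i₀,i₂,…⟩`. -/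
theorem plucker_three_term (n r : ℕ) (hr : 1 ≤ r)
    (x : Matrix (Fin (n+1)) (Fin (r+1)) ℂ)
    (minor : (Fin (r+1) → Fin (n+1)) → ℂ)
    (hminor : ∀ i, minor i = Matrix.det (Matrix.of fun p q => x (i p) q))
    (i : Fin (r+1) → Fin (n+1)) (j0 j1 : Fin (n+1)) :
    minor i * minor (Function.update (Function.update i 0 j0) ⟨1, by omega⟩ j1) =
      minor (Function.update i 0 j0) * minor (Function.update i ⟨1, by omega⟩ j1)
      + minor (Function.update i 0 j1) *
          minor (Function.update (Function.update i 0 j0) ⟨1, by omega⟩ (i 0)) := by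
  obtain ⟨s, rfl⟩ : ∃ s, r = s + 1 := ⟨r - 1, by omega⟩
  have hone : (⟨1, by omega⟩ : Fin (s + 2)) = (0 : Fin (s + 1)).succ := rfl
  have hminor_cons (a b : Fin (n + 1)) (t : Fin s → Fin (n + 1)) :
      minor (Fin.cons a (Fin.cons b t)) = det (of (Fin.cons (x a) (Fin.cons (x b) (x ∘ t)))) := by
    rw [hminor]
    congr 1
    ext p q
    refine Fin.cases ?_ (fun p => Fin.cases ?_ (fun p => ?_) p) p <;> rfl
  cases i using Fin.consCases with | cons i0 i' =>
  cases i' using Fin.consCases with | cons i1 t =>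
  simp only [hone, Fin.cons_zero, Fin.update_cons_zero, ← Fin.cons_update, hminor_cons]
  exact det_cons_cons_mul_det_cons_cons _ _ _ _ _
end

section
/- Let k ≥ 1 be an integer, φ : ℤ → ℂ an arbitrary function, and for integers s ≥ 0 and u ∈ ℤ define the 'quantum determinant' boundary value T(s,u) := φ(u−s−k) · (∏_{l=0}^{k−1} ∏_{p=1}^{s−1} φ(u+s+k−2l−2p−2)) · (∏_{l=1}^{k−1} φ(u+s+k−2l)), with empty products equal to 1. Then T satisfies the discrete Laplace equation T(s,u+1)·T(s,u−1) = T(s+1,u)·T(s−1,u) for all integers s ≥ 2 and all u ∈ ℤ. -/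
/-- **The quantum determinant satisfies the discrete Laplace equation.**
For `k ≥ 1` and an arbitrary `φ : ℤ → ℂ`, the boundary value
`T(s,u) = φ(u−s−k)·∏_{l=0}^{k−1}∏_{p=1}^{s−1} φ(u+s+k−2l−2p−2)·∏_{l=1}^{k−1} φ(u+s+k−2l)`
satisfies `T(s,u+1)·T(s,u−1) = T(s+1,u)·T(s−1,u)` for all integers `s ≥ 2`, `u`. -/
theorem quantum_det_discrete_laplace (k : ℕ) (hk : 1 ≤ k) (φ : ℤ → ℂ)
    (T : ℕ → ℤ → ℂ)
    (hT : ∀ (s : ℕ) (u : ℤ), T s u =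
      φ (u - (s : ℤ) - (k : ℤ)) *
      (∏ l ∈ Finset.range k, ∏ p ∈ Finset.range (s - 1),
        φ (u + (s : ℤ) + (k : ℤ) - 2*(l : ℤ) - 2*((p : ℤ)+1) - 2)) *
      ∏ l ∈ Finset.range (k - 1), φ (u + (s : ℤ) + (k : ℤ) - 2*((l : ℤ)+1))) :
    ∀ s : ℕ, 2 ≤ s → ∀ u : ℤ,
      T s (u+1) * T s (u-1) = T (s+1) u * T (s-1) u := by
  intro s hs u
  obtain ⟨m, rfl⟩ : ∃ m, s = m + 2 := ⟨s - 2, by omega⟩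
  rw [hT (m+2) (u+1), hT (m+2) (u-1), hT (m+2+1) u, hT (m+2-1) u]
  simp only [show m+2-1 = m+1 from rfl, show m+2+1 = m+3 from rfl,
    show m+3-1 = m+2 from rfl, show m+1-1 = m from rfl]
  -- canonical double product
  set P : ℤ → ℕ → ℂ := fun a n => ∏ l ∈ Finset.range k, ∏ p ∈ Finset.range n,
    φ (a - 2*(l:ℤ) - 2*(p:ℤ)) with hPdef
  have e1 : (∏ l ∈ Finset.range k, ∏ p ∈ Finset.range (m+1),
      φ ((u+1) + ((m:ℕ)+2:ℕ) + (k:ℤ) - 2*(l:ℤ) - 2*((p:ℤ)+1) - 2))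
      = P (u + m + k - 1) (m+1) :=
    Finset.prod_congr rfl fun l _ => Finset.prod_congr rfl fun p _ => by
      congr 1; push_cast; ring
  have e2 : (∏ l ∈ Finset.range k, ∏ p ∈ Finset.range (m+1),
      φ ((u-1) + ((m:ℕ)+2:ℕ) + (k:ℤ) - 2*(l:ℤ) - 2*((p:ℤ)+1) - 2))
      = P (u + m + k - 3) (m+1) :=
    Finset.prod_congr rfl fun l _ => Finset.prod_congr rfl fun p _ => by
      congr 1; push_cast; ring
  have e3 : (∏ l ∈ Finset.range k, ∏ p ∈ Finset.range (m+2),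
      φ (u + ((m:ℕ)+3:ℕ) + (k:ℤ) - 2*(l:ℤ) - 2*((p:ℤ)+1) - 2))
      = P (u + m + k - 1) (m+2) :=
    Finset.prod_congr rfl fun l _ => Finset.prod_congr rfl fun p _ => by
      congr 1; push_cast; ring
  have e4 : (∏ l ∈ Finset.range k, ∏ p ∈ Finset.range m,
      φ (u + ((m:ℕ)+1:ℕ) + (k:ℤ) - 2*(l:ℤ) - 2*((p:ℤ)+1) - 2))
      = P (u + m + k - 3) m :=
    Finset.prod_congr rfl fun l _ => Finset.prod_congr rfl fun p _ => by
      congr 1; push_cast; ring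
  rw [e1, e2, e3, e4]
  have hPsucc : ∀ (a : ℤ) (n : ℕ), P a (n+1)
      = P a n * ∏ l ∈ Finset.range k, φ (a - 2*(l:ℤ) - 2*(n:ℤ)) := by
    intro a n
    simp only [hPdef, Finset.prod_range_succ, Finset.prod_mul_distrib]
  have hE : (∏ l ∈ Finset.range k, φ (u + m + k - 1 - 2*(l:ℤ) - 2*((m+1:ℕ):ℤ)))
      = ∏ l ∈ Finset.range k, φ (u + m + k - 3 - 2*(l:ℤ) - 2*((m:ℕ):ℤ)) :=
    Finset.prod_congr rfl fun l _ => by congr 1; push_cast; ring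
  rw [hPsucc (u + m + k - 1) (m+1), hPsucc (u + m + k - 3) m, hE]
  -- outer single products coincide pairwise
  have f1 : (∏ l ∈ Finset.range (k-1), φ ((u+1) + ((m:ℕ)+2:ℕ) + (k:ℤ) - 2*((l:ℤ)+1)))
      = ∏ l ∈ Finset.range (k-1), φ (u + ((m:ℕ)+3:ℕ) + (k:ℤ) - 2*((l:ℤ)+1)) :=
    Finset.prod_congr rfl fun l _ => by congr 1; push_cast; ring
  have f2 : (∏ l ∈ Finset.range (k-1), φ ((u-1) + ((m:ℕ)+2:ℕ) + (k:ℤ) - 2*((l:ℤ)+1)))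
      = ∏ l ∈ Finset.range (k-1), φ (u + ((m:ℕ)+1:ℕ) + (k:ℤ) - 2*((l:ℤ)+1)) :=
    Finset.prod_congr rfl fun l _ => by congr 1; push_cast; ring
  rw [f1, f2]
  have g1 : ((u+1) - ((m:ℕ)+2:ℕ) - (k:ℤ)) = u - ((m:ℕ)+1:ℕ) - (k:ℤ) := by push_cast; ring
  have g2 : ((u-1) - ((m:ℕ)+2:ℕ) - (k:ℤ)) = u - ((m:ℕ)+3:ℕ) - (k:ℤ) := by push_cast; ring
  rw [g1, g2]
  ring
end

section
/- Y-system from HBDE: let T : ℤ³ → ℂ be nowhere zero and satisfy T^a_s(u+1)·T^a_s(u−1) − T^a_{s+1}(u)·T^a_{s−1}(u) = T^{a+1}_s(u)·T^{a−1}_s(u) for all (a,s,u) ∈ ℤ³. Define Y^a_s(u) := (T^a_{s+1}(u)·T^a_{s−1}(u)) / (T^{a+1}_s(u)·T^{a−1}_s(u)). Then for all (a,s,u) ∈ ℤ³ all the quantities 1 + Y^a_{s±1}(u) and 1 + (Y^{a±1}_s(u))^{−1} are nonzero and Y^a_s(u+1)·Y^a_s(u−1) = ((1 + Y^a_{s+1}(u))·(1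 + Y^a_{s−1}(u))) / ((1 + (Y^{a+1}_s(u))^{−1})·(1 + (Y^{a−1}_s(u))^{−1})). -/
/-- **The Y-system from HBDE.**
Let `T : ℤ³ → ℂ` be nowhere zero and satisfy HBDE, and set
`Y^a_s(u) = T^a_{s+1}(u)·T^a_{s−1}(u) / (T^{a+1}_s(u)·T^{a−1}_s(u))`.  Then all
quantities `1 + Y^a_{s±1}(u)` and `1 + (Y^{a±1}_s(u))⁻¹` are nonzero and
`Y^a_s(u+1)·Y^a_s(u−1)
  = (1+Y^a_{s+1}(u))(1+Y^a_{s−1}(u)) / ((1+(Y^{a+1}_s(u))⁻¹)(1+(Y^{a−1}_s(u))⁻¹))`. -/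
theorem hirota_Y_system (T : ℤ → ℤ → ℤ → ℂ)
    (hnz : ∀ a s u : ℤ, T a s u ≠ 0)
    (hT : ∀ a s u : ℤ,
      T a s (u+1) * T a s (u-1) - T a (s+1) u * T a (s-1) u
        = T (a+1) s u * T (a-1) s u)
    (Y : ℤ → ℤ → ℤ → ℂ)
    (hY : ∀ a s u : ℤ,
      Y a s u = T a (s+1) u * T a (s-1) u / (T (a+1) s u * T (a-1) s u)) :
    ∀ a s u : ℤ,
      (1 + Y a (s+1) u ≠ 0 ∧ 1 + Y a (s-1) u ≠ 0 ∧
        1 + (Y (a+1) s u)⁻¹ ≠ 0 ∧ 1 + (Y (a-1) s u)⁻¹ ≠ 0) ∧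
      Y a s (u+1) * Y a s (u-1) =
        (1 + Y a (s+1) u) * (1 + Y a (s-1) u) /
          ((1 + (Y (a+1) s u)⁻¹) * (1 + (Y (a-1) s u)⁻¹)) := by
  have key : ∀ a s u : ℤ, 1 + Y a s u
      = T a s (u+1) * T a s (u-1) / (T (a+1) s u * T (a-1) s u) := by
    intro a s u
    rw [hY]
    field_simp [hnz]
    linear_combination -hT a s u
  have keyi : ∀ a s u : ℤ, 1 + (Y a s u)⁻¹
      = T a s (u+1) * T a s (u-1) / (T a (s+1) u * T a (s-1) u) := by
    intro a s u
    rw [hY, inv_div]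
    field_simp [hnz]
    linear_combination -hT a s u
  intro a s u
  refine ⟨⟨?_, ?_, ?_, ?_⟩, ?_⟩
  · rw [key]
    exact div_ne_zero (mul_ne_zero (hnz _ _ _) (hnz _ _ _))
      (mul_ne_zero (hnz _ _ _) (hnz _ _ _))
  · rw [key]
    exact div_ne_zero (mul_ne_zero (hnz _ _ _) (hnz _ _ _))
      (mul_ne_zero (hnz _ _ _) (hnz _ _ _))
  · rw [keyi]
    exact div_ne_zero (mul_ne_zero (hnz _ _ _) (hnz _ _ _))
      (mul_ne_zero (hnz _ _ _) (hnz _ _ _))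
  · rw [keyi]
    exact div_ne_zero (mul_ne_zero (hnz _ _ _) (hnz _ _ _))
      (mul_ne_zero (hnz _ _ _) (hnz _ _ _))
  · rw [hY a s (u+1), hY a s (u-1), key a (s+1) u, key a (s-1) u,
      keyi (a+1) s u, keyi (a-1) s u]
    field_simp [hnz]
end

section
/- Determinant solution of HBDE growing in a: let T¹ : ℤ² → ℂ be arbitrary, written T¹_s(u). For integers a ≥ 1 define T^a_s(u) := det( T¹_{s+i−j}(u+i+j−a−1) )_{i,j=1,…,a} and set T⁰_s(u) := 1. Then for every integer a ≥ 1 and all s, u ∈ ℤ: T^a_s(u+1)·T^a_s(u−1) − T^a_{s+1}(u)·T^a_{s−1}(u) = T^{a+1}_s(u)·T^{a−1}_s(u). -/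
/-- The determinant family `T^a_s(u) = det(T¹_{s+i−j}(u+i+j−a−1))_{i,j=1,…,a}`,
with `T⁰_s(u) = 1`. -/
noncomputable def Tdet (T1 : ℤ → ℤ → ℂ) : ℕ → ℤ → ℤ → ℂ
  | 0, _, _ => 1
  | a + 1, s, u =>
    Matrix.det (Matrix.of fun i j : Fin (a+1) =>
      T1 (s + ((i : ℕ) : ℤ) - ((j : ℕ) : ℤ))
         (u + ((i : ℕ) : ℤ) + ((j : ℕ) : ℤ) - (a : ℤ)))

/-!
`T^{a+1}_s(u)` is the determinant of an `(a+1) × (a+1)` matrix `M` whose four `a × a` corner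
minors (delete the first or last row and the first or last column) are `T^a` at
`(s, u ± 1)` and `(s ± 1, u)`, and whose interior minor is `T^{a-1}_s(u)`. The equation is
therefore the Desnanot–Jacobi identity for `M`. That identity is Jacobi's complementary minor
theorem for the `2 × 2` corner block of `adj M`: multiplying `M` by a block matrix built from
columns of `adj M` gives `det M · det (adj M)_corner = det M_interior · (det M)²`, and the
spurious factor `det M` is cancelled on the generic matrix `X • 1 + M`, whose determinant is a
monic polynomial.
-/

open Matrix Polynomial

section DesnanotJacobi

variable {R : Type*} [CommRing R]

theorem det_mul_det_toBlocks₂₂_adjugate {α β : Type*} [Fintype α] [Fintype β] [DecidableEq α]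
    [DecidableEq β] (M : Matrix (α ⊕ β) (α ⊕ β) R) :
    M.det * (adjugate M).toBlocks₂₂.det = M.toBlocks₁₁.det * M.det ^ Fintype.card β := by
  have hMN : M * fromBlocks 1 (adjugate M).toBlocks₁₂ 0 (adjugate M).toBlocks₂₂ =
      fromBlocks M.toBlocks₁₁ 0 M.toBlocks₂₁ (M.det • 1) := by
    have hMA := congr_fun₂ (mul_adjugate M)
    ext i (j | j)
    · rcases i with i | i <;>
        simp [mul_apply, Fintype.sum_sum_type, one_apply, toBlocks₁₁, toBlocks₂₁]
    · have := hMA i (.inr j)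
      rcases i with i | i <;>
        simpa [mul_apply, Fintype.sum_sum_type, one_apply, toBlocks₁₂, toBlocks₂₂] using this
  calc M.det * (adjugate M).toBlocks₂₂.det
      = (M * fromBlocks 1 (adjugate M).toBlocks₁₂ 0 (adjugate M).toBlocks₂₂).det := by
        rw [det_mul, det_fromBlocks_zero₂₁, det_one, one_mul]
    _ = M.toBlocks₁₁.det * M.det ^ Fintype.card β := by
        rw [hMN, det_fromBlocks_zero₁₂, det_smul, det_one, mul_one]

def finSumBoundaryEquiv (n : ℕ) : Fin n ⊕ Fin 2 ≃ Fin (n + 2) :=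
  finSumFinEquiv.trans (finRotate (n + 2))

theorem finSumBoundaryEquiv_inl {n : ℕ} (i : Fin n) :
    finSumBoundaryEquiv n (.inl i) = i.castSucc.succ := by
  ext
  rw [finSumBoundaryEquiv, Equiv.trans_apply, coe_finRotate_of_ne_last] <;> simp [Fin.ext_iff]
  omega

theorem finSumBoundaryEquiv_inr_zero {n : ℕ} : finSumBoundaryEquiv n (.inr 0) = Fin.last _ := by
  ext
  rw [finSumBoundaryEquiv, Equiv.trans_apply, coe_finRotate_of_ne_last] <;> simp [Fin.ext_iff]

theorem finSumBoundaryEquiv_inr_one {n : ℕ} : finSumBoundaryEquiv n (.inr 1) = 0 := by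
  rw [finSumBoundaryEquiv, Equiv.trans_apply, finSumFinEquiv_apply_right]
  exact finRotate_last

theorem det_mul_desnanot_jacobi {n : ℕ} (M : Matrix (Fin (n + 2)) (Fin (n + 2)) R) :
    M.det * ((M.submatrix Fin.succ Fin.succ).det * (M.submatrix Fin.castSucc Fin.castSucc).det -
      (M.submatrix Fin.succ Fin.castSucc).det * (M.submatrix Fin.castSucc Fin.succ).det) =
    M.det * (M.det * (M.submatrix (Fin.succ ∘ Fin.castSucc) (Fin.succ ∘ Fin.castSucc)).det) := by
  set e := finSumBoundaryEquiv n
  have hinterior : (M.submatrix e e).toBlocks₁₁ =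
      M.submatrix (Fin.succ ∘ Fin.castSucc) (Fin.succ ∘ Fin.castSucc) := by
    ext
    simp [e, toBlocks₁₁, finSumBoundaryEquiv_inl]
  have h := det_mul_det_toBlocks₂₂_adjugate (M.submatrix e e)
  simp only [hinterior, adjugate_submatrix_equiv_self, det_submatrix_equiv_self, det_fin_two,
    toBlocks₂₂, of_apply, submatrix_apply, e, finSumBoundaryEquiv_inr_one,
    finSumBoundaryEquiv_inr_zero, adjugate_fin_succ_eq_det_submatrix, Fin.succAbove_zero,
    Fin.succAbove_last, Fintype.card_fin, Fin.val_last, Fin.val_zero, pow_add, pow_zero,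
    one_mul] at h
  have hsign : (-1 : R) ^ (n + 1) * (-1) ^ (n + 1) = 1 := by
    rw [← mul_pow]
    simp
  linear_combination h + M.det * ((M.submatrix Fin.succ Fin.castSucc).det *
    (M.submatrix Fin.castSucc Fin.succ).det - (M.submatrix Fin.succ Fin.succ).det *
    (M.submatrix Fin.castSucc Fin.castSucc).det) * hsign

theorem desnanot_jacobi {n : ℕ} (M : Matrix (Fin (n + 2)) (Fin (n + 2)) R) :
    (M.submatrix Fin.succ Fin.succ).det * (M.submatrix Fin.castSucc Fin.castSucc).det -
      (M.submatrix Fin.succ Fin.castSucc).det * (M.submatrix Fin.castSucc Fin.succ).det =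
    M.det * (M.submatrix (Fin.succ ∘ Fin.castSucc) (Fin.succ ∘ Fin.castSucc)).det := by
  have hgeneric :=
    (charpoly_monic (-M)).isRegular.left (det_mul_desnanot_jacobi (charmatrix (-M)))
  have heval : (charmatrix (-M)).map (evalRingHom 0) = M := by
    ext i j
    by_cases h : i = j
    · simp [h, charmatrix_apply_eq]
    · simp [charmatrix_apply_ne _ _ _ h]
  simpa only [map_sub, map_mul, RingHom.map_det, RingHom.mapMatrix_apply, ← submatrix_map, heval]
    using congrArg (evalRingHom 0) hgeneric

end DesnanotJacobi

def hirotaMatrix {α : Type*} (T1 : ℤ → ℤ → α) (m : ℕ) (s u : ℤ) : Matrix (Fin m) (Fin m) α :=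
  of fun i j => T1 (s + i - j) (u + i + j - ((m : ℤ) - 1))

theorem hirotaMatrix_submatrix {α : Type*} (T1 : ℤ → ℤ → α) {k m : ℕ} (s u : ℤ)
    {f g : Fin k → Fin m} (p q : ℕ) (hf : ∀ i, (f i : ℕ) = i + p) (hg : ∀ j, (g j : ℕ) = j + q) :
    (hirotaMatrix T1 m s u).submatrix f g = hirotaMatrix T1 k (s + p - q) (u + p + q + k - m) := by
  ext i j
  simp only [hirotaMatrix, submatrix_apply, of_apply, hf, hg]
  push_cast
  ring_nf

theorem Tdet_eq_det_hirotaMatrix (T1 : ℤ → ℤ → ℂ) (m : ℕ) (s u : ℤ) :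
    Tdet T1 m s u = (hirotaMatrix T1 m s u).det := by
  cases m with
  | zero => simp [Tdet]
  | succ m =>
    simp only [Tdet, hirotaMatrix]
    congr 3
    ext i j
    push_cast
    ring_nf

/-- **Determinant solution of HBDE growing in `a`.**
For arbitrary `T¹ : ℤ² → ℂ` the family `T^a_s(u) = det(T¹_{s+i−j}(u+i+j−a−1))_{i,j=1,…,a}`
(`T⁰_s(u) = 1`) satisfies HBDE for every `a ≥ 1` and all `s, u ∈ ℤ`. -/
theorem hirota_det_solution_in_a (T1 : ℤ → ℤ → ℂ) :
    ∀ a : ℕ, 1 ≤ a → ∀ s u : ℤ,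
      Tdet T1 a s (u+1) * Tdet T1 a s (u-1) - Tdet T1 a (s+1) u * Tdet T1 a (s-1) u
        = Tdet T1 (a+1) s u * Tdet T1 (a-1) s u := by
  rintro a ha s u
  obtain ⟨m, rfl⟩ : ∃ m, a = m + 1 := ⟨a - 1, by omega⟩
  have h := desnanot_jacobi (hirotaMatrix T1 (m + 2) s u)
  have hsucc : ∀ i : Fin (m + 1), (i.succ : ℕ) = i + 1 := Fin.val_succ
  have hcast : ∀ i : Fin (m + 1), (i.castSucc : ℕ) = i + 0 := fun _ => rfl
  have hinterior : ∀ i : Fin m, ((Fin.succ ∘ Fin.castSucc) i : ℕ) = i + 1 := fun _ => rfl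
  simp only [hirotaMatrix_submatrix T1 s u 1 1 hsucc hsucc,
    hirotaMatrix_submatrix T1 s u 0 0 hcast hcast, hirotaMatrix_submatrix T1 s u 1 0 hsucc hcast,
    hirotaMatrix_submatrix T1 s u 0 1 hcast hsucc,
    hirotaMatrix_submatrix T1 s u 1 1 hinterior hinterior, ← Tdet_eq_det_hirotaMatrix] at h
  convert h using 3 <;> push_cast <;> ring_nf
end

section
/- Determinant solution of HBDE of fixed size: let t ≥ 1 be an integer and let h⁽¹⁾,…,h⁽ᵗ⁺¹⁾ : ℤ → ℂ and h̄⁽¹⁾,…,h̄⁽ᵗ⁺¹⁾ : ℤ → ℂ be arbitrary functions. For integers 0 ≤ a ≤ t+1 and s, u ∈ ℤ define D^a_s(u) as the determinant of the (t+1)×(t+1) matrix with columns indexed by i = 1,…,t+1 whose r-th row is (h⁽ⁱ⁾(u+s−a+2r))_i for r = 1,…,a and is (h̄⁽ⁱ⁾(u−s+a−t+2(r−a−1)))_i for r = a+1,…,t+1. Then for every integer a with 1 ≤ a ≤ t and all s, u ∈ ℤ: D^a_s(u+1)·D^a_s(u−1) − D^a_{s+1}(u)·D^a_{s−1}(u)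 = D^{a+1}_s(u)·D^{a−1}_s(u). -/
/-!
All six determinants in the equation share the `t - 1` rows built from the holomorphic arguments
`u + s - a + 3, …, u + s + a - 1` and the antiholomorphic arguments `u - s + a - t + 1, …,
u - s - a + t - 1`; each of them adds two of the four rows `x = h(u + s - a + 1)`,
`y = h(u + s + a + 1)`, `z = h̄(u - s + a - t - 1)`, `w = h̄(u - s - a + t + 1)`. Up to cyclic
reorderings of rows, whose signs cancel, the equation is therefore the three-term Plücker relation
`N(x,z) N(y,w) - N(x,w) N(y,z) = N(x,y) N(z,w)`, where `N(α,β)` is a fixed matrix with two of its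
rows replaced by `α, β`. Its defect is a linear form in `w` that kills `x`, `y`, `z` and the common
rows; these span the whole space unless `N(x,y) = N(x,z) = N(y,z) = 0`, when the relation is
trivial.
-/

/-- The `(t+1) × (t+1)` determinant `D^a_s(u)` whose first `a` rows are built from the
holomorphic functions `h⁽ⁱ⁾` with arguments `u+s−a+2, …, u+s+a` and whose remaining
`t+1−a` rows are built from the antiholomorphic functions `h̄⁽ⁱ⁾` with arguments
`u−s+a−t, …, u−s−a+t`. -/
noncomputable def Ddet (t : ℕ) (h hb : Fin (t+1) → ℤ → ℂ) (a : ℕ) (s u : ℤ) : ℂ :=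
  Matrix.det (Matrix.of fun (r i : Fin (t+1)) =>
    if (r : ℕ) < a then h i (u + s - (a : ℤ) + 2*(((r : ℕ) : ℤ) + 1))
    else hb i (u - s + (a : ℤ) - (t : ℤ) + 2*(((r : ℕ) : ℤ) - (a : ℤ))))

open Matrix Equiv

namespace Matrix

section CommRing

variable {R : Type*} [CommRing R] {ι : Type*} [Fintype ι] [DecidableEq ι]

def detUpdateRow (M : Matrix ι ι R) (i : ι) : (ι → R) →ₗ[R] R where
  toFun β := (M.updateRow i β).det
  map_add' := det_updateRow_add M i
  map_smul' := det_updateRow_smul M i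

theorem det_eq_sign_mul_det_of_rows_eq {M M' : Matrix ι ι R} (σ : Perm ι)
    (h : ∀ r c, M' r c = M (σ r) c) : M.det = Perm.sign σ * M'.det := by
  have hM' : M' = M.submatrix σ id := Matrix.ext h
  rw [hM', det_permute, ← mul_assoc, ← Int.cast_mul, ← Units.val_mul, Int.units_mul_self]
  simp

theorem det_updateRow_updateRow_swap (S : Matrix ι ι R) {i₀ i₁ : ι} (h : i₀ ≠ i₁) (α β : ι → R) :
    ((S.updateRow i₀ β).updateRow i₁ α).det = -((S.updateRow i₀ α).updateRow i₁ β).det := by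
  have hσ : (S.updateRow i₀ β).updateRow i₁ α
      = ((S.updateRow i₀ α).updateRow i₁ β).submatrix (Equiv.swap i₀ i₁) id := by
    ext r : 1
    rcases eq_or_ne r i₀ with rfl | h₀
    · simp [h]
    rcases eq_or_ne r i₁ with rfl | h₁
    · simp [h]
    · simp [swap_apply_of_ne_of_ne h₀ h₁, h₀, h₁]
  rw [hσ, det_permute, Perm.sign_swap h]
  simp

end CommRing

section Field

variable {K : Type*} [Field K] {ι : Type*} [Fintype ι] [DecidableEq ι]

theorem linearMap_eq_zero_of_forall_row_eq_zero {M : Matrix ι ι K} (hM : M.det ≠ 0)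
    {φ : (ι → K) →ₗ[K] K} (hφ : ∀ i, φ (M i) = 0) : φ = 0 :=
  LinearMap.ext_on_range
    ((linearIndependent_rows_of_det_ne_zero hM).span_eq_top_of_card_eq_finrank' (by simp))
    (by simpa using hφ)

theorem det_updateRow_updateRow_plucker (S : Matrix ι ι K) {i₀ i₁ : ι} (h : i₀ ≠ i₁)
    (x y z w : ι → K) :
    let N := fun α β => ((S.updateRow i₀ α).updateRow i₁ β).det
    N x z * N y w - N x w * N y z = N x y * N z w := by
  intro N
  have hdiag : ∀ α, N α α = 0 := fun α =>
    det_zero_of_row_eq h (by simp [updateRow_ne h])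
  have hswap : ∀ α β, N β α = -N α β := det_updateRow_updateRow_swap S h
  let f := N x z • detUpdateRow (S.updateRow i₀ y) i₁ - N y z • detUpdateRow (S.updateRow i₀ x) i₁
    - N x y • detUpdateRow (S.updateRow i₀ z) i₁
  have hf : ∀ v, f v = N x z * N y v - N y z * N x v - N x y * N z v := fun _ => rfl
  have hfx : f x = 0 := by rw [hf, hdiag, hswap x y, hswap x z]; ring
  have hfy : f y = 0 := by rw [hf, hdiag, hswap y z]; ring
  have hfz : f z = 0 := by rw [hf, hdiag]; ring
  have hfS : ∀ k, k ≠ i₀ → k ≠ i₁ → f (S k) = 0 := by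
    intro k h₀ h₁
    have hS : ∀ α, N α (S k) = 0 := fun α =>
      det_zero_of_row_eq h₁.symm (by simp [updateRow_ne h₀, updateRow_ne h₁])
    rw [hf, hS, hS, hS]; ring
  -- If `N α β ≠ 0`, the rows `α`, `β`, `S k` (`k ≠ i₀, i₁`) span, so `f` vanishes identically.
  have hf_eq_zero : ∀ α β, f α = 0 → f β = 0 → N α β ≠ 0 → f = 0 := by
    intro α β hα hβ hαβ
    refine linearMap_eq_zero_of_forall_row_eq_zero hαβ fun k => ?_
    rcases eq_or_ne k i₁ with rfl | h₁
    · simpa using hβ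
    rcases eq_or_ne k i₀ with rfl | h₀
    · simpa [updateRow_ne h₁] using hα
    · simpa [updateRow_ne h₁, updateRow_ne h₀] using hfS k h₀ h₁
  suffices f w = 0 by rw [hf] at this; linear_combination this
  by_cases hxy : N x y = 0
  · by_cases hxz : N x z = 0
    · by_cases hyz : N y z = 0
      · rw [hf, hxy, hxz, hyz]; ring
      · rw [hf_eq_zero y z hfy hfz hyz, LinearMap.zero_apply]
    · rw [hf_eq_zero x z hfx hfz hxz, LinearMap.zero_apply]
  · rw [hf_eq_zero x y hfx hfy hxy, LinearMap.zero_apply]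

end Field

end Matrix

theorem Fin.val_cycleIcc {n : ℕ} {i j : Fin (n + 1)} (hij : i ≤ j) (k : Fin (n + 1)) :
    (cycleIcc i j k : ℕ) =
      if (k : ℕ) < i ∨ (j : ℕ) < k then (k : ℕ) else if (k : ℕ) = j then (i : ℕ) else k + 1 := by
  rcases lt_or_ge k i with hki | hik
  · simp [cycleIcc_of_lt hki, Fin.lt_def.mp hki]
  rcases lt_or_ge j k with hjk | hkj
  · simp [cycleIcc_of_gt hjk, Fin.lt_def.mp hjk]
  have hk : ¬ ((k : ℕ) < (i : ℕ) ∨ (j : ℕ) < (k : ℕ)) := by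
    rw [Fin.le_def] at hik hkj; omega
  rcases eq_or_lt_of_le hkj with rfl | hkj
  · simp [cycleIcc_of_last hij, not_lt.mpr hik]
  · rw [cycleIcc_of_ge_of_lt hik hkj, Fin.val_add_one_of_lt (hkj.trans_le (Fin.le_last j)),
      if_neg hk, if_neg (Fin.val_ne_of_ne hkj.ne)]

def stackedRows {α : Type*} {n : ℕ} (F G : ℕ → Fin (n + 1) → α) (a : ℕ) :
    Matrix (Fin (n + 1)) (Fin (n + 1)) α :=
  Matrix.of fun r c => if (r : ℕ) < a then F r c else G (r - a) c

theorem Fin.sign_cycleIcc_zero_mul_sign_cycleIcc_last {n : ℕ} {i j : Fin (n + 1)}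
    (hij : (j : ℕ) = i + 1) :
    Perm.sign (Fin.cycleIcc 0 i) * Perm.sign (Fin.cycleIcc j (Fin.last n))
      = -Perm.sign (Fin.cycleIcc 0 (Fin.last n)) := by
  rw [Fin.sign_cycleIcc_of_le (Fin.zero_le _), Fin.sign_cycleIcc_of_le (Fin.le_last _),
    Fin.sign_cycleIcc_of_le (Fin.zero_le _), ← pow_add, Fin.val_zero, Fin.val_last,
    show n - 0 = i - 0 + (n - j) + 1 by omega, pow_succ]
  simp

theorem det_stackedRows_hirota {K : Type*} [Field K] {n : ℕ} (F G : ℕ → Fin (n + 1) → K) {a : ℕ}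
    (ha : 1 ≤ a) (han : a ≤ n) :
    let F' := fun k => F (k + 1)
    let G' := fun k => G (k + 1)
    (stackedRows F' G' a).det * (stackedRows F G a).det
      - (stackedRows F' G a).det * (stackedRows F G' a).det
      = (stackedRows F G' (a + 1)).det * (stackedRows F' G (a - 1)).det := by
  intro F' G'
  set S := stackedRows F' G' a
  let i₀ : Fin (n + 1) := ⟨a - 1, by omega⟩
  have h : i₀ ≠ Fin.last n := Fin.ne_of_val_ne (by simp [i₀]; omega)
  let N := fun α β => ((S.updateRow i₀ α).updateRow (Fin.last n) β).det
  -- With `x = F 0`, `y = F a`, `z = G 0`, `w = G (n - a + 1)`, each determinant is `N` of two of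
  -- these after rotating the rows `0, …, a - 1` and/or `a, …, n`.
  let c₁ := Fin.cycleIcc 0 i₀
  let c₂ := Fin.cycleIcc (⟨a, by omega⟩ : Fin (n + 1)) (Fin.last n)
  let c₃ := Fin.cycleIcc 0 (Fin.last n)
  have hval₀ : ((0 : Fin (n + 1)) : ℕ) = 0 := rfl
  obtain ⟨hyw, hzw, hyz, hxw, hyx, hxz⟩ :
      (stackedRows F' G' a).det = Perm.sign 1 * N (F a) (G (n - a + 1)) ∧
      (stackedRows F' G (a - 1)).det = Perm.sign 1 * N (G 0) (G (n - a + 1)) ∧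
      (stackedRows F' G a).det = Perm.sign c₂ * N (F a) (G 0) ∧
      (stackedRows F G' a).det = Perm.sign c₁ * N (F 0) (G (n - a + 1)) ∧
      (stackedRows F G' (a + 1)).det = Perm.sign c₃ * N (F a) (F 0) ∧
      (stackedRows F G a).det = Perm.sign (c₁ * c₂) * N (F 0) (G 0) := by
    refine ⟨?_, ?_, ?_, ?_, ?_, ?_⟩ <;> refine det_eq_sign_mul_det_of_rows_eq _ fun r c => ?_ <;>
    · simp only [updateRow_apply, Fin.ext_iff, Fin.val_last, i₀, S, stackedRows, of_apply, F', G',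
        c₁, c₂, c₃, Perm.one_apply, Perm.mul_apply, Fin.val_cycleIcc, Fin.zero_le, Fin.le_last]
      split_ifs <;> first | omega | (congr 1 <;> omega)
  have hsign : ((Perm.sign c₁ : ℤ) : K) * (Perm.sign c₂ : ℤ) = -(Perm.sign c₃ : ℤ) := by
    rw [← Int.cast_mul, ← Units.val_mul,
      Fin.sign_cycleIcc_zero_mul_sign_cycleIcc_last (show a = a - 1 + 1 by omega)]
    push_cast
    ring
  have hswap : N (F a) (F 0) = -N (F 0) (F a) := det_updateRow_updateRow_swap S h _ _
  have hpl : N (F 0) (G 0) * N (F a) (G (n - a + 1)) - N (F 0) (G (n - a + 1)) * N (F a) (G 0)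
      = N (F 0) (F a) * N (G 0) (G (n - a + 1)) :=
    det_updateRow_updateRow_plucker S h _ _ _ _
  rw [hyw, hxz, hyz, hxw, hyx, hzw, hswap, Perm.sign_mul, Perm.sign_one]
  push_cast
  linear_combination ((Perm.sign c₁ : ℤ) * (Perm.sign c₂ : ℤ) : K) * hpl
    + N (F 0) (F a) * N (G 0) (G (n - a + 1)) * hsign

theorem Ddet_eq_det_stackedRows {t : ℕ} {h hb : Fin (t + 1) → ℤ → ℂ} {a : ℕ} {s u : ℤ}
    {F G : ℕ → Fin (t + 1) → ℂ} (hF : ∀ k i, F k i = h i (u + s - a + 2 * (k + 1)))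
    (hG : ∀ k i, G k i = hb i (u - s + a - t + 2 * k)) :
    Ddet t h hb a s u = (stackedRows F G a).det := by
  unfold Ddet stackedRows
  congr
  ext r i
  split_ifs with hr
  · rw [hF]
  · rw [hG, Nat.cast_sub (not_lt.mp hr)]

theorem hirota_det_solution_fixed_size_general (t : ℕ)
    (h hb : Fin (t+1) → ℤ → ℂ) :
    ∀ a : ℕ, 1 ≤ a → a ≤ t → ∀ s u : ℤ,
      Ddet t h hb a s (u+1) * Ddet t h hb a s (u-1)
        - Ddet t h hb a (s+1) u * Ddet t h hb a (s-1) u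
        = Ddet t h hb (a+1) s u * Ddet t h hb (a-1) s u := by
  intro a ha hat s u
  convert det_stackedRows_hirota (fun k i => h i (u + s - a + 1 + 2 * k))
    (fun k i => hb i (u - s + a - t - 1 + 2 * k)) ha hat using 3 <;>
  refine Ddet_eq_det_stackedRows (fun k i => ?_) (fun k i => ?_) <;>
  · push_cast [ha]
    ring_nf

/-- **Determinant solution of HBDE of fixed size.**
For `t ≥ 1` and arbitrary functions `h⁽¹⁾,…,h⁽ᵗ⁺¹⁾, h̄⁽¹⁾,…,h̄⁽ᵗ⁺¹⁾ : ℤ → ℂ`, the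
determinants `D^a_s(u)` satisfy HBDE for every `1 ≤ a ≤ t` and all `s, u ∈ ℤ`. -/
theorem hirota_det_solution_fixed_size (t : ℕ) (ht : 1 ≤ t)
    (h hb : Fin (t+1) → ℤ → ℂ) :
    ∀ a : ℕ, 1 ≤ a → a ≤ t → ∀ s u : ℤ,
      Ddet t h hb a s (u+1) * Ddet t h hb a s (u-1)
        - Ddet t h hb a (s+1) u * Ddet t h hb a (s-1) u
        = Ddet t h hb (a+1) s u * Ddet t h hb (a-1) s u :=
  hirota_det_solution_fixed_size_general t h hb
end

section
/- Discrete Liouville equation in Y-form: let φ : ℤ → ℂ be nowhere zero and let T : ℤ² → ℂ (written T_s(u)) satisfy T_s(u+1)·T_s(u−1) − T_{s+1}(u)·T_{s−1}(u) = φ(u+s)·φ(u−s−2) for all s, u ∈ ℤ. Define Y_s(u) := (T_{s+1}(u)·T_{s−1}(u)) / (φ(u+s)·φ(u−s−2)). Then for all s, u ∈ ℤ: Y_s(u−1)·Y_s(u+1) = (Y_{s+1}(u) + 1)·(Y_{s−1}(u) + 1). -/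
/-- **Discrete Liouville equation in Y-form.**
Let `φ : ℤ → ℂ` be nowhere zero and `T_s(u)` satisfy
`T_s(u+1)·T_s(u−1) − T_{s+1}(u)·T_{s−1}(u) = φ(u+s)·φ(u−s−2)`.  Then
`Y_s(u) = T_{s+1}(u)·T_{s−1}(u)/(φ(u+s)·φ(u−s−2))` satisfies
`Y_s(u−1)·Y_s(u+1) = (Y_{s+1}(u)+1)·(Y_{s−1}(u)+1)`. -/
theorem discrete_liouville_Y_form (φ : ℤ → ℂ) (hφ : ∀ u : ℤ, φ u ≠ 0)
    (T : ℤ → ℤ → ℂ)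
    (hT : ∀ s u : ℤ,
      T s (u+1) * T s (u-1) - T (s+1) u * T (s-1) u = φ (u+s) * φ (u-s-2))
    (Y : ℤ → ℤ → ℂ)
    (hY : ∀ s u : ℤ, Y s u = T (s+1) u * T (s-1) u / (φ (u+s) * φ (u-s-2))) :
    ∀ s u : ℤ, Y s (u-1) * Y s (u+1) = (Y (s+1) u + 1) * (Y (s-1) u + 1) := by
  intro s u
  have A : Y (s+1) u + 1 =
      T (s+1) (u+1) * T (s+1) (u-1) / (φ (u+(s+1)) * φ (u-(s+1)-2)) := by
    rw [hY, div_add_one (mul_ne_zero (hφ _) (hφ _))]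
    congr 1
    linear_combination -hT (s+1) u
  have B : Y (s-1) u + 1 =
      T (s-1) (u+1) * T (s-1) (u-1) / (φ (u+(s-1)) * φ (u-(s-1)-2)) := by
    rw [hY, div_add_one (mul_ne_zero (hφ _) (hφ _))]
    congr 1
    linear_combination -hT (s-1) u
  rw [A, B, hY s (u-1), hY s (u+1)]
  have e1 : u - 1 + s = u + (s-1) := by ring
  have e2 : u - 1 - s - 2 = u - (s+1) - 2 := by ring
  have e3 : u + 1 + s = u + (s+1) := by ring
  have e4 : u + 1 - s - 2 = u - (s-1) - 2 := by ring
  rw [e1, e2, e3, e4, div_mul_div_comm, div_mul_div_comm]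
  ring_nf
end

section
/- Duality between potentials and wave functions: let T, F : ℤ³ → ℂ (written T^a_s(u) and F^a(s,u)) be nowhere zero and suppose that for all (a,s,u) ∈ ℤ³ the two linear problems hold: (i) T^{a+1}_{s+1}(u)·F^a(s,u) − T^{a+1}_s(u−1)·F^a(s+1,u+1) = T^a_s(u)·F^{a+1}(s+1,u), and (ii) T^a_{s+1}(u−1)·F^a(s,u) − T^a_s(u)·F^a(s+1,u−1) = T^{a+1}_s(u−1)·F^{a−1}(s+1,u). Suppose moreover that T satisfies HBDE: T^a_s(u+1)·T^a_s(u−1) − T^a_{s+1}(u)·T^a_{s−1}(u) = T^{a+1}_s(u)·T^{a−1}_s(u) for all (a,s,u). Then F also satisfies HBDE: F^a(s,u+1)·F^a(s,u−1) − F^a(s+1,u)·F^a(s−1,u) = F^{a+1}(s,u)·F^{a−1}(s,u) for all (a,s,u) ∈ ℤ³. -/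
/-- **Duality between potentials and wave functions.**
Let `T, F : ℤ³ → ℂ` be nowhere zero, connected by the two auxiliary linear problems
(i) `T^{a+1}_{s+1}(u)·F^a(s,u) − T^{a+1}_s(u−1)·F^a(s+1,u+1) = T^a_s(u)·F^{a+1}(s+1,u)` and
(ii) `T^a_{s+1}(u−1)·F^a(s,u) − T^a_s(u)·F^a(s+1,u−1) = T^{a+1}_s(u−1)·F^{a−1}(s+1,u)`,
and suppose `T` satisfies HBDE.  Then `F` also satisfies HBDE. -/
theorem hirota_duality (T F : ℤ → ℤ → ℤ → ℂ)
    (hTnz : ∀ a s u : ℤ, T a s u ≠ 0)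
    (hFnz : ∀ a s u : ℤ, F a s u ≠ 0)
    (hlin1 : ∀ a s u : ℤ,
      T (a+1) (s+1) u * F a s u - T (a+1) s (u-1) * F a (s+1) (u+1)
        = T a s u * F (a+1) (s+1) u)
    (hlin2 : ∀ a s u : ℤ,
      T a (s+1) (u-1) * F a s u - T a s u * F a (s+1) (u-1)
        = T (a+1) s (u-1) * F (a-1) (s+1) u)
    (hT : ∀ a s u : ℤ,
      T a s (u+1) * T a s (u-1) - T a (s+1) u * T a (s-1) u
        = T (a+1) s u * T (a-1) s u) :
    ∀ a s u : ℤ,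
      F a s (u+1) * F a s (u-1) - F a (s+1) u * F a (s-1) u
        = F (a+1) s u * F (a-1) s u := by
  intro a s u
  -- shifted instances of the linear problems
  have h1 : T (a+1) s u * F a (s-1) u - T (a+1) (s-1) (u-1) * F a s (u+1)
      = T a (s-1) u * F (a+1) s u := by
    have := hlin1 a (s-1) u; simpa using this
  have h2 : T a s (u-1) * F a (s-1) u - T a (s-1) u * F a s (u-1)
      = T (a+1) (s-1) (u-1) * F (a-1) s u := by
    have := hlin2 a (s-1) u; simpa using this
  have hC : T a (s+1) u * F a s (u+1) - T a s (u+1) * F a (s+1) u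
      = T (a+1) s u * F (a-1) (s+1) (u+1) := by
    have := hlin2 a s (u+1); simpa using this
  have hB : T a (s+1) u * F (a-1) s u - T a s (u-1) * F (a-1) (s+1) (u+1)
      = T (a-1) s u * F a (s+1) u := by
    have := hlin1 (a-1) s u; simpa using this
  -- a derived third linear relation, using HBDE for T
  have hR : T a (s+1) u * (T a s (u-1) * F a s (u+1) - T a (s-1) u * F a (s+1) u)
      = T a (s+1) u * (T (a+1) s u * F (a-1) s u) := by
    linear_combination T a s (u-1) * hC - T (a+1) s u * hB + F a (s+1) u * hT a s u
  have hR' : T a s (u-1) * F a s (u+1) - T a (s-1) u * F a (s+1) u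
      = T (a+1) s u * F (a-1) s u := mul_left_cancel₀ (hTnz a (s+1) u) hR
  -- combine everything
  have hM : T a (s-1) u * (T (a+1) (s-1) (u-1) * F a (s-1) u) ≠ 0 :=
    mul_ne_zero (hTnz a (s-1) u) (mul_ne_zero (hTnz (a+1) (s-1) (u-1)) (hFnz a (s-1) u))
  apply mul_left_cancel₀ hM
  linear_combination (T (a+1) (s-1) (u-1)) * (F a (s-1) u)^2 * hR'
    + (F a (s-1) u) * (T a s (u-1) * F a (s-1) u - T a (s-1) u * F a s (u-1)) * h1
    + (T a (s-1) u * F (a+1) s u * F a (s-1) u - T (a+1) s u * (F a (s-1) u)^2) * h2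
end

section
/- Wronskian solution of the discrete Liouville equation: let Q, R, Q̄, R̄, φ, φ̄ : ℤ → ℂ satisfy the wronskian relations R(u)·Q(u+2) − Q(u)·R(u+2) = φ(u) and R̄(u)·Q̄(u+2) − Q̄(u)·R̄(u+2) = φ̄(u+1) for all u ∈ ℤ. Define T_s(u) := Q(u+s+1)·R̄(u−s) − R(u+s+1)·Q̄(u−s). Then for all s, u ∈ ℤ: T_s(u+1)·T_s(u−1) − T_{s+1}(u)·T_{s−1}(u) = φ(u+s)·φ̄(u−s). -/
/-- **Wronskian solution of the discrete Liouville equation.**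
Let `Q, R, Q̄, R̄, φ, φ̄ : ℤ → ℂ` satisfy the wronskian relations
`R(u)·Q(u+2) − Q(u)·R(u+2) = φ(u)` and `R̄(u)·Q̄(u+2) − Q̄(u)·R̄(u+2) = φ̄(u+1)`.
Then `T_s(u) = Q(u+s+1)·R̄(u−s) − R(u+s+1)·Q̄(u−s)` satisfies
`T_s(u+1)·T_s(u−1) − T_{s+1}(u)·T_{s−1}(u) = φ(u+s)·φ̄(u−s)`. -/
theorem wronskian_solution_discrete_liouville (Q R Qb Rb φ φb : ℤ → ℂ)
    (hW : ∀ u : ℤ, R u * Q (u+2) - Q u * R (u+2) = φ u)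
    (hWb : ∀ u : ℤ, Rb u * Qb (u+2) - Qb u * Rb (u+2) = φb (u+1))
    (T : ℤ → ℤ → ℂ)
    (hT : ∀ s u : ℤ, T s u = Q (u+s+1) * Rb (u-s) - R (u+s+1) * Qb (u-s)) :
    ∀ s u : ℤ,
      T s (u+1) * T s (u-1) - T (s+1) u * T (s-1) u = φ (u+s) * φb (u-s) := by
  intro s u
  have h1 : T s (u+1) = Q (u+s+2) * Rb (u-s+1) - R (u+s+2) * Qb (u-s+1) := by
    rw [hT]; ring_nf
  have h2 : T s (u-1) = Q (u+s) * Rb (u-s-1) - R (u+s) * Qb (u-s-1) := by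
    rw [hT]; ring_nf
  have h3 : T (s+1) u = Q (u+s+2) * Rb (u-s-1) - R (u+s+2) * Qb (u-s-1) := by
    rw [hT]; ring_nf
  have h4 : T (s-1) u = Q (u+s) * Rb (u-s+1) - R (u+s) * Qb (u-s+1) := by
    rw [hT]; ring_nf
  have hw : R (u+s) * Q (u+s+2) - Q (u+s) * R (u+s+2) = φ (u+s) := by
    have := hW (u+s); rw [show u+s+2 = u+s+2 from rfl] at this; exact this
  have hwb : Rb (u-s-1) * Qb (u-s+1) - Qb (u-s-1) * Rb (u-s+1) = φb (u-s) := by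
    have := hWb (u-s-1)
    rw [show u-s-1+2 = u-s+1 by ring, show u-s-1+1 = u-s by ring] at this
    exact this
  rw [h1, h2, h3, h4]
  linear_combination (Rb (u-s-1) * Qb (u-s+1) - Qb (u-s-1) * Rb (u-s+1)) * hw +
    φ (u+s) * hwb
end

section
/- Conservation law of the s-dynamics for the discrete Liouville equation: let φ, φ̄ : ℤ → ℂ and let T : ℤ² → ℂ (written T_s(u)) be nowhere zero and satisfy T_s(u+1)·T_s(u−1) − T_{s+1}(u)·T_{s−1}(u) = φ(u+s)·φ̄(u−s) for all s, u ∈ ℤ. Define A_s(u) := (φ(u−2)·T_{s+1}(u−s) + φ(u)·T_{s−1}(u−s−2)) / T_s(u−s−1). Then A_s(u) is independent of s: A_s(u) = A_{s'}(u) for all s, s', u ∈ ℤ. -/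
/-!
After clearing denominators, `A_{s+1}(u) = A_s(u)` is `φ(u)·E(s, u−s−2) − φ(u−2)·E(s+1, u−s−1)`,
where `E(s, u)` is the Liouville equation at `(s, u)` written as `lhs − rhs = 0`: the two
right-hand sides are `φ(u−2)·φ̄(u−2s−2)` and `φ(u)·φ̄(u−2s−2)`, so they cancel in this
combination. Hence `s ↦ A_s(u)` is `1`-periodic on `ℤ`, i.e. constant.
-/

def liouvilleA {K : Type*} [Field K] (φ : ℤ → K) (T : ℤ → ℤ → K) (s u : ℤ) : K :=
  (φ (u-2) * T (s+1) (u-s) + φ u * T (s-1) (u-s-2)) / T s (u-s-1)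

theorem liouvilleA_succ {K : Type*} [Field K] (φ φb : ℤ → K) (T : ℤ → ℤ → K)
    (hnz : ∀ s u : ℤ, T s u ≠ 0)
    (hT : ∀ s u : ℤ,
      T s (u+1) * T s (u-1) - T (s+1) u * T (s-1) u = φ (u+s) * φb (u-s))
    (s u : ℤ) :
    liouvilleA φ T (s+1) u = liouvilleA φ T s u := by
  rw [liouvilleA, liouvilleA, div_eq_div_iff (hnz _ _) (hnz _ _)]
  linear_combination (norm := ring_nf) φ u * hT s (u-s-2) - φ (u-2) * hT (s+1) (u-s-1)

/-- **Conservation law of the `s`-dynamics for the discrete Liouville equation.**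
Let `T` be nowhere zero and satisfy
`T_s(u+1)·T_s(u−1) − T_{s+1}(u)·T_{s−1}(u) = φ(u+s)·φ̄(u−s)`.  Then
`A_s(u) = (φ(u−2)·T_{s+1}(u−s) + φ(u)·T_{s−1}(u−s−2))/T_s(u−s−1)` is independent of `s`. -/
theorem discrete_liouville_conservation (φ φb : ℤ → ℂ) (T : ℤ → ℤ → ℂ)
    (hnz : ∀ s u : ℤ, T s u ≠ 0)
    (hT : ∀ s u : ℤ,
      T s (u+1) * T s (u-1) - T (s+1) u * T (s-1) u = φ (u+s) * φb (u-s))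
    (A : ℤ → ℤ → ℂ)
    (hA : ∀ s u : ℤ,
      A s u = (φ (u-2) * T (s+1) (u-s) + φ u * T (s-1) (u-s-2)) / T s (u-s-1)) :
    ∀ s s' u : ℤ, A s u = A s' u := by
  intro s s' u
  have hA' : A = liouvilleA φ T := funext₂ hA
  have hper : Function.Periodic (fun t => liouvilleA φ T t u) 1 :=
    fun t => liouvilleA_succ φ φb T hnz hT t u
  subst hA'
  simpa using (hper.int_mul_eq s).trans (hper.int_mul_eq s').symm
end

section
/- Fusion relations from the discrete Liouville equation with open boundary: let φ : ℤ → ℂ and T_s(u) (s ∈ ℤ with s ≥ −1, u ∈ ℤ) satisfy: T_s(u+1)·T_s(u−1) − T_{s+1}(u)·T_{s−1}(u) = φ(u+s)·φ(u−s−2) for all s ≥ 0 and u ∈ ℤ; T_{−1}(u) = 0 for all u; T_0(u) = φ(u−1) for all u; and T_s(u) ≠ 0 for all s ≥ 0 and u. Then for all integers s ≥ 0 and all u ∈ ℤ the fusion relations hold: T_s(u−1)·T_1(u+s) = φ(u+s−2)·T_{s+1}(u) + φ(u+s)·T_{s−1}(u−2), and T_s(u+1)·T_1(u−s) = φ(u−s)·T_{s+1}(u)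 + φ(u−s−2)·T_{s−1}(u+2). -/
/-!
Multiplying the first fusion relation at level `s + 1` by `T_s(u)`, the difference of the two
sides is a combination of the fusion relation at level `s` and two instances of the Liouville
equation, so induction on `s` works once `T_s(u) ≠ 0` is cancelled; the base case `s = 0` is the
boundary condition. The second relation is the first one for the reflected solution
`u ↦ T_s(−u)`, `φ'(u) = φ(−u−2)`.
-/

structure IsOpenDiscreteLiouville {R : Type*} [CommRing R] (φ : ℤ → R) (T : ℤ → ℤ → R) :
    Prop where
  hirota : ∀ s : ℤ, 0 ≤ s → ∀ u : ℤ,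
    T s (u+1) * T s (u-1) - T (s+1) u * T (s-1) u = φ (u+s) * φ (u-s-2)
  neg_one : ∀ u : ℤ, T (-1) u = 0
  zero : ∀ u : ℤ, T 0 u = φ (u-1)

namespace IsOpenDiscreteLiouville

variable {R : Type*} [CommRing R] {φ : ℤ → R} {T : ℤ → ℤ → R}

theorem reflect (h : IsOpenDiscreteLiouville φ T) :
    IsOpenDiscreteLiouville (fun u ↦ φ (-u - 2)) (fun s u ↦ T s (-u)) where
  hirota s hs u := by linear_combination (norm := ring_nf) h.hirota s hs (-u)
  neg_one u := h.neg_one (-u)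
  zero u := by rw [h.zero]; ring_nf

theorem fusion_left [IsDomain R] (h : IsOpenDiscreteLiouville φ T)
    (hnz : ∀ s, 0 ≤ s → ∀ u, T s u ≠ 0) {s : ℤ} (hs : 0 ≤ s) (u : ℤ) :
    T s (u-1) * T 1 (u+s) = φ (u+s-2) * T (s+1) u + φ (u+s) * T (s-1) (u-2) := by
  induction s, hs using Int.leInduction generalizing u with
  | base => rw [h.zero, zero_sub, h.neg_one]; ring_nf
  | succ s hs ih =>
    refine mul_left_cancel₀ (hnz s hs u) ?_
    linear_combination (norm := ring_nf) T (s+1) (u-1) * ih (u + 1) +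
      φ (u+s-1) * h.hirota (s + 1) (by omega) u - φ (u+s+1) * h.hirota s hs (u - 1)

theorem fusion_right [IsDomain R] (h : IsOpenDiscreteLiouville φ T)
    (hnz : ∀ s, 0 ≤ s → ∀ u, T s u ≠ 0) {s : ℤ} (hs : 0 ≤ s) (u : ℤ) :
    T s (u+1) * T 1 (u-s) = φ (u-s) * T (s+1) u + φ (u-s-2) * T (s-1) (u+2) := by
  have := h.reflect.fusion_left (fun s hs u ↦ hnz s hs (-u)) hs (-u)
  linear_combination (norm := ring_nf) this

end IsOpenDiscreteLiouville

/-- **Fusion relations from the discrete Liouville equation with open boundary.**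
Let `φ : ℤ → ℂ` and `T_s(u)` (`s ≥ −1`) satisfy the discrete Liouville equation
`T_s(u+1)·T_s(u−1) − T_{s+1}(u)·T_{s−1}(u) = φ(u+s)·φ(u−s−2)` for `s ≥ 0`, together with
`T_{−1}(u) = 0`, `T_0(u) = φ(u−1)`, and `T_s(u) ≠ 0` for `s ≥ 0`.  Then for all `s ≥ 0` the
fusion relations `T_s(u−1)·T_1(u+s) = φ(u+s−2)·T_{s+1}(u) + φ(u+s)·T_{s−1}(u−2)` and
`T_s(u+1)·T_1(u−s) = φ(u−s)·T_{s+1}(u) + φ(u−s−2)·T_{s−1}(u+2)` hold. -/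
theorem discrete_liouville_fusion (φ : ℤ → ℂ) (T : ℤ → ℤ → ℂ)
    (hT : ∀ s : ℤ, 0 ≤ s → ∀ u : ℤ,
      T s (u+1) * T s (u-1) - T (s+1) u * T (s-1) u = φ (u+s) * φ (u-s-2))
    (hm1 : ∀ u : ℤ, T (-1) u = 0)
    (h0 : ∀ u : ℤ, T 0 u = φ (u-1))
    (hnz : ∀ s : ℤ, 0 ≤ s → ∀ u : ℤ, T s u ≠ 0) :
    ∀ s : ℤ, 0 ≤ s → ∀ u : ℤ,
      T s (u-1) * T 1 (u+s) = φ (u+s-2) * T (s+1) u + φ (u+s) * T (s-1) (u-2) ∧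
      T s (u+1) * T 1 (u-s) = φ (u-s) * T (s+1) u + φ (u-s-2) * T (s-1) (u+2) := by
  have h : IsOpenDiscreteLiouville φ T := ⟨hT, hm1, h0⟩
  exact fun s hs u ↦ ⟨h.fusion_left hnz hs u, h.fusion_right hnz hs u⟩
end

section
/- Summation formula for the transfer matrix eigenvalue: let Q, R, φ : ℤ → ℂ satisfy R(u)·Q(u+2) − Q(u)·R(u+2) = φ(u) for all u ∈ ℤ, with Q(u) ≠ 0 for all u. Define T_s(u) := Q(u+s+1)·R(u−s−1) − R(u+s+1)·Q(u−s−1). Then for every integer s ≥ 0 and every u ∈ ℤ: T_s(u) = Q(u+s+1)·Q(u−s−1) · Σ_{j=0}^{s} φ(u−s+2j−1) / (Q(u−s+2j+1)·Q(u−s+2j−1)). -/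
/-!
Dividing the wronskian relation by `Q(u) Q(u+2)` gives
`φ(u) / (Q(u+2) Q(u)) = R(u)/Q(u) - R(u+2)/Q(u+2)`, so the sum telescopes to
`R(u-s-1)/Q(u-s-1) - R(u+s+1)/Q(u+s+1)`, which is `T_s(u) / (Q(u+s+1) Q(u-s-1))`.
-/

open Finset

theorem Finset.sum_range_sub_arith_shift {G : Type*} [AddCommGroup G] (f : ℤ → G) (a d : ℤ)
    (n : ℕ) : ∑ j ∈ range n, (f (a + d * j) - f (a + d * j + d)) = f a - f (a + d * n) := by
  have h := Finset.sum_range_sub' (fun j : ℕ => f (a + d * j)) n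
  simp only [Nat.cast_add, Nat.cast_one, mul_add, mul_one, ← add_assoc, Nat.cast_zero,
    mul_zero, add_zero] at h
  exact h

theorem wronskian_div_eq_sub {K : Type*} [Field K] {Q R φ : ℤ → K} (hQ : ∀ u, Q u ≠ 0)
    (hW : ∀ u, R u * Q (u + 2) - Q u * R (u + 2) = φ u) (u : ℤ) :
    φ u / (Q (u + 2) * Q u) = R u / Q u - R (u + 2) / Q (u + 2) := by
  rw [← hW, div_sub_div _ _ (hQ u) (hQ (u + 2)), mul_comm (Q (u + 2))]

theorem sum_wronskian_div_eq_sub {K : Type*} [Field K] {Q R φ : ℤ → K} (hQ : ∀ u, Q u ≠ 0)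
    (hW : ∀ u, R u * Q (u + 2) - Q u * R (u + 2) = φ u) (s : ℕ) (u : ℤ) :
    ∑ j ∈ range (s + 1), φ (u - s + 2 * j - 1) / (Q (u - s + 2 * j + 1) * Q (u - s + 2 * j - 1)) =
      R (u - s - 1) / Q (u - s - 1) - R (u + s + 1) / Q (u + s + 1) := by
  calc _ = ∑ j ∈ range (s + 1), (R (u - s - 1 + 2 * j) / Q (u - s - 1 + 2 * j) -
          R (u - s - 1 + 2 * j + 2) / Q (u - s - 1 + 2 * j + 2)) := by
        refine sum_congr rfl fun j _ => ?_
        rw [show u - s + 2 * j - 1 = u - s - 1 + 2 * j by ring,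
          show u - s + 2 * j + 1 = u - s - 1 + 2 * j + 2 by ring, wronskian_div_eq_sub hQ hW]
    _ = R (u - s - 1) / Q (u - s - 1) - R (u + s + 1) / Q (u + s + 1) := by
        rw [sum_range_sub_arith_shift (fun v => R v / Q v),
          show u - s - 1 + 2 * ((s + 1 : ℕ) : ℤ) = u + s + 1 by push_cast; ring]

/-- **Summation formula for the transfer matrix eigenvalue.**
Let `Q, R, φ : ℤ → ℂ` satisfy the wronskian relation `R(u)·Q(u+2) − Q(u)·R(u+2) = φ(u)` with
`Q` nowhere zero, and set `T_s(u) = Q(u+s+1)·R(u−s−1) − R(u+s+1)·Q(u−s−1)`.  Then for every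
`s ≥ 0`:
`T_s(u) = Q(u+s+1)·Q(u−s−1)·Σ_{j=0}^{s} φ(u−s+2j−1)/(Q(u−s+2j+1)·Q(u−s+2j−1))`. -/
theorem transfer_matrix_sum_formula (Q R φ : ℤ → ℂ)
    (hQnz : ∀ u : ℤ, Q u ≠ 0)
    (hW : ∀ u : ℤ, R u * Q (u+2) - Q u * R (u+2) = φ u)
    (T : ℤ → ℤ → ℂ)
    (hT : ∀ s u : ℤ, T s u = Q (u+s+1) * R (u-s-1) - R (u+s+1) * Q (u-s-1)) :
    ∀ (s : ℕ) (u : ℤ),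
      T (s : ℤ) u = Q (u+(s : ℤ)+1) * Q (u-(s : ℤ)-1) *
        ∑ j ∈ Finset.range (s+1),
          φ (u - (s : ℤ) + 2*(j : ℤ) - 1) /
            (Q (u - (s : ℤ) + 2*(j : ℤ) + 1) * Q (u - (s : ℤ) + 2*(j : ℤ) - 1)) := by
  intro s u
  have hplus := hQnz (u + s + 1)
  have hminus := hQnz (u - s - 1)
  rw [hT, sum_wronskian_div_eq_sub hQnz hW]
  field_simp
end

section
/- Conservation laws of the s-dynamics (Theorem): let N ≥ 1, let ψ_P, ψ̄_P : ℤ → ℂ for P = 1,…,N, and define T(s,u) := Σ_{P=1}^{N} ψ_P(u+s)·ψ̄_P(u−s). Fix u ∈ ℤ and suppose the N×(N+1) complex matrix (ψ_P(u+2B))_{P=1,…,N; B=1,…,N+1} has rank N. For s ∈ ℤ let 𝒯(s) be the (N+1)×(N+1) matrix with entries 𝒯(s)_{B,B'} = T(s+B+B', u−s+B−B'), and for B, R ∈ {1,…,N+1} let 𝒯[B|R](s) denote its minor with row B and column R deleted. Then for every column index R, all row indices B, B'' ∈ {1,…,N+1}, and all s₁, s₂ ∈ ℤ: 𝒯[B|R](s₁)·𝒯[B''|R](s₂)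 = 𝒯[B|R](s₂)·𝒯[B''|R](s₁); in particular, wherever the denominators are nonzero the ratios 𝒯[B|R](s)/𝒯[B''|R](s) are independent of s. -/
/-- **Conservation laws of the `s`-dynamics (Theorem).**
Let `T(s,u) = Σ_{P=1}^{N} ψ_P(u+s)·ψ̄_P(u−s)`; fix `u` and suppose the `N × (N+1)` matrix
`(ψ_P(u+2B))` has rank `N`.  Let `𝒯(s)_{B,B'} = T(s+B+B', u−s+B−B')` and let `𝒯[B|R](s)` be
its minor with row `B` and column `R` deleted.  Then for every column `R`, rows `B, B''` and
all `s₁, s₂`: `𝒯[B|R](s₁)·𝒯[B''|R](s₂) = 𝒯[B|R](s₂)·𝒯[B''|R](s₁)`; in particular wherever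
the denominators are nonzero the ratios `𝒯[B|R](s)/𝒯[B''|R](s)` are independent of `s`. -/
theorem conservation_laws_s_dynamics (N : ℕ) (hN : 1 ≤ N)
    (ψ ψb : Fin N → ℤ → ℂ) (T : ℤ → ℤ → ℂ)
    (hT : ∀ s u : ℤ, T s u = ∑ P : Fin N, ψ P (u+s) * ψb P (u-s))
    (u : ℤ)
    (hrank : Matrix.rank (Matrix.of fun (P : Fin N) (B : Fin (N+1)) =>
      ψ P (u + 2*(((B : ℕ) : ℤ)+1))) = N)
    (𝒯 : ℤ → Matrix (Fin (N+1)) (Fin (N+1)) ℂ)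
    (h𝒯 : ∀ (s : ℤ) (B B' : Fin (N+1)),
      𝒯 s B B' = T (s + (((B : ℕ) : ℤ)+1) + (((B' : ℕ) : ℤ)+1))
                   (u - s + (((B : ℕ) : ℤ)+1) - (((B' : ℕ) : ℤ)+1)))
    (minor : ℤ → Fin (N+1) → Fin (N+1) → ℂ)
    (hminor : ∀ (s : ℤ) (B R : Fin (N+1)),
      minor s B R = Matrix.det ((𝒯 s).submatrix B.succAbove R.succAbove)) :
    (∀ (R B B'' : Fin (N+1)) (s₁ s₂ : ℤ),
      minor s₁ B R * minor s₂ B'' R = minor s₂ B R * minor s₁ B'' R) ∧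
    (∀ (R B B'' : Fin (N+1)) (s₁ s₂ : ℤ),
      minor s₁ B'' R ≠ 0 → minor s₂ B'' R ≠ 0 →
      minor s₁ B R / minor s₁ B'' R = minor s₂ B R / minor s₂ B'' R) := by
  have key : ∀ (s : ℤ) (B R : Fin (N+1)), minor s B R =
      Matrix.det (Matrix.of fun (i j : Fin N) =>
        ψ j (u + 2*(((B.succAbove i : ℕ) : ℤ)+1))) *
      Matrix.det (Matrix.of fun (i j : Fin N) =>
        ψb i (u - 2*s - 2*(((R.succAbove j : ℕ) : ℤ)+1))) := by
    intro s B R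
    rw [hminor, ← Matrix.det_mul]
    congr 1
    ext i j
    simp only [Matrix.submatrix_apply, Matrix.mul_apply, Matrix.of_apply, h𝒯, hT]
    refine Finset.sum_congr rfl fun P _ => ?_
    have h1 : (u - s + (((B.succAbove i : ℕ) : ℤ)+1) - (((R.succAbove j : ℕ) : ℤ)+1))
        + (s + (((B.succAbove i : ℕ) : ℤ)+1) + (((R.succAbove j : ℕ) : ℤ)+1))
        = u + 2*(((B.succAbove i : ℕ) : ℤ)+1) := by ring
    have h2 : (u - s + (((B.succAbove i : ℕ) : ℤ)+1) - (((R.succAbove j : ℕ) : ℤ)+1))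
        - (s + (((B.succAbove i : ℕ) : ℤ)+1) + (((R.succAbove j : ℕ) : ℤ)+1))
        = u - 2*s - 2*(((R.succAbove j : ℕ) : ℤ)+1) := by ring
    rw [h1, h2]
  have part1 : ∀ (R B B'' : Fin (N+1)) (s₁ s₂ : ℤ),
      minor s₁ B R * minor s₂ B'' R = minor s₂ B R * minor s₁ B'' R := by
    intro R B B'' s₁ s₂
    rw [key, key, key, key]
    ring
  refine ⟨part1, fun R B B'' s₁ s₂ h1 h2 => ?_⟩
  rw [div_eq_div_iff h1 h2]
  exact part1 R B B'' s₁ s₂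
end
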